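/- arXiv:2407.00792 — 2 statements merged into one kernel-verified Lean document; each statement's English description precedes it below -/
import Mathlib

section
/- If {Z_n}_n is a sequence of n×n matrices admitting splittings Z_n = R_n + N_n with rank(R_n)/n → 0 and ‖N_n‖ → 0 (spectral norm), then the singular values of Z_n are distributed as the zero function: for every continuous compactly supported F : ℝ → ℝ, (1/n) Σ_{j=1}^n F(σ_j(Z_n)) → F(0). -/
open Filter

/-- The singular values of a complex square matrix: square roots of the eigenvalues of Aᴴ·A. -/
noncomputable def singVals {n : ℕ} (A : Matrix (Fin n) (Fin n) ℂ) : Fin n → ℝ :=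
  fun j => Real.sqrt ((Matrix.isHermitian_conjTranspose_mul_self A).eigenvalues j)

/-- The spectral (operator ℓ²) norm of a complex square matrix. -/
noncomputable def specNorm {n : ℕ} (A : Matrix (Fin n) (Fin n) ℂ) : ℝ :=
  ‖Matrix.toEuclideanCLM (𝕜 := ℂ) A‖

open scoped InnerProductSpace in
lemma key_count {n : ℕ} (Z R N : Matrix (Fin n) (Fin n) ℂ) (h : Z = R + N) :
    (Finset.univ.filter fun j => specNorm N < singVals Z j).card ≤ R.rank := by
  classical
  set hH := Matrix.isHermitian_conjTranspose_mul_self Z with hHdef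
  set u := hH.eigenvectorBasis with hu
  set μ := hH.eigenvalues with hμ
  set S := (Finset.univ.filter fun j => specNorm N < singVals Z j) with hS
  set ι := {j : Fin n // j ∈ S}
  have horth : Orthonormal ℂ (fun j : ι => (u j.1 : EuclideanSpace ℂ (Fin n))) :=
    u.orthonormal.comp _ Subtype.coe_injective
  let g : (ι → ℂ) →ₗ[ℂ] EuclideanSpace ℂ (Fin n) :=
    Fintype.linearCombination ℂ (fun j : ι => (u j.1 : EuclideanSpace ℂ (Fin n)))
  set TZ := Matrix.toEuclideanCLM (𝕜 := ℂ) Z with hTZ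
  set TR := Matrix.toEuclideanCLM (𝕜 := ℂ) R with hTR
  set TN := Matrix.toEuclideanCLM (𝕜 := ℂ) N with hTN
  let f : (ι → ℂ) →ₗ[ℂ] EuclideanSpace ℂ (Fin n) := TR.toLinearMap.comp g
  -- eigen equation in CLM form
  have hEig : ∀ j : Fin n, Matrix.toEuclideanCLM (𝕜 := ℂ) (Z.conjTranspose * Z) (u j)
      = (μ j : ℂ) • (u j) := by
    intro j
    apply (WithLp.equiv 2 (Fin n → ℂ)).injective
    ext k
    have h2 := congrFun (hH.mulVec_eigenvectorBasis j) k
    simp only [Matrix.ofLp_toEuclideanCLM, Matrix.toLin'_apply, WithLp.equiv_apply, WithLp.ofLp_smul,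
      Pi.smul_apply, smul_eq_mul, Complex.real_smul] at h2 ⊢
    convert h2 using 2
  -- eigenvalues over S are > ‖N‖²
  have hμS : ∀ j : ι, specNorm N ^ 2 < μ j.1 := by
    intro j
    have hj : specNorm N < singVals Z j.1 := (Finset.mem_filter.mp j.2).2
    have h2 : specNorm N < Real.sqrt (μ j.1) := hj
    exact (Real.lt_sqrt (norm_nonneg _)).mp h2
  -- injectivity of f
  have hinj : Function.Injective f := by
    rw [injective_iff_map_eq_zero]
    intro c hc
    by_contra hc0
    obtain ⟨j₀, hj₀⟩ : ∃ j, c j ≠ 0 := by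
      by_contra hall
      push_neg at hall
      exact hc0 (funext hall)
    set v : EuclideanSpace ℂ (Fin n) := g c with hv
    have hgc : v = ∑ j : ι, c j • (u j.1 : EuclideanSpace ℂ (Fin n)) :=
      Fintype.linearCombination_apply _ _ _
    -- ‖TZ v‖² = Σ μ_j ‖c j‖²
    have hZv : ‖TZ v‖ ^ 2 = ∑ j : ι, μ j.1 * ‖c j‖ ^ 2 := by
      have h1 : (⟪TZ v, TZ v⟫_ℂ) = ⟪v, Matrix.toEuclideanCLM (𝕜 := ℂ) (Z.conjTranspose * Z) v⟫_ℂ := by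
        rw [hTZ, map_mul, ← Matrix.star_eq_conjTranspose, map_star,
          ContinuousLinearMap.star_eq_adjoint]
        simp [ContinuousLinearMap.adjoint_inner_right]
      have h2 : Matrix.toEuclideanCLM (𝕜 := ℂ) (Z.conjTranspose * Z) v
          = ∑ j : ι, ((μ j.1 : ℂ) * c j) • (u j.1 : EuclideanSpace ℂ (Fin n)) := by
        rw [hgc, map_sum]
        refine Finset.sum_congr rfl fun j _ => ?_
        rw [map_smul, hEig j.1, smul_smul, mul_comm]
      have h3 : (⟪TZ v, TZ v⟫_ℂ) = ∑ j : ι, (starRingEnd ℂ) (c j) * ((μ j.1 : ℂ) * c j) := by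
        rw [h1, h2, hgc]
        exact horth.inner_sum _ _ _
      have h4 : (⟪TZ v, TZ v⟫_ℂ) = ((‖TZ v‖ : ℂ)) ^ 2 := inner_self_eq_norm_sq_to_K _
      rw [← Complex.ofReal_pow] at h4
      have h5 := congrArg Complex.re (h4.symm.trans h3)
      rw [Complex.ofReal_re] at h5
      rw [h5, Complex.re_sum]
      refine Finset.sum_congr rfl fun j _ => ?_
      have h6 : (starRingEnd ℂ) (c j) * ((μ j.1 : ℂ) * c j)
          = (μ j.1 : ℂ) * ((starRingEnd ℂ) (c j) * c j) := by ring
      rw [h6, Complex.conj_mul']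
      rw [← Complex.ofReal_pow, ← Complex.ofReal_mul, Complex.ofReal_re]
    -- ‖v‖² = Σ ‖c j‖²
    have hvnorm : ‖v‖ ^ 2 = ∑ j : ι, ‖c j‖ ^ 2 := by
      have h4 : (⟪v, v⟫_ℂ) = ((‖v‖ : ℂ)) ^ 2 := inner_self_eq_norm_sq_to_K _
      rw [← Complex.ofReal_pow] at h4
      have h3 : (⟪v, v⟫_ℂ) = ∑ j : ι, (starRingEnd ℂ) (c j) * c j := by
        rw [hgc]; exact horth.inner_sum _ _ _
      have h5 := congrArg Complex.re (h4.symm.trans h3)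
      rw [Complex.ofReal_re] at h5
      rw [h5, Complex.re_sum]
      refine Finset.sum_congr rfl fun j _ => ?_
      rw [Complex.conj_mul', ← Complex.ofReal_pow, Complex.ofReal_re]
    -- strict inequality
    have hstrict : specNorm N ^ 2 * ‖v‖ ^ 2 < ‖TZ v‖ ^ 2 := by
      rw [hZv, hvnorm, Finset.mul_sum]
      refine Finset.sum_lt_sum (fun j _ => ?_) ⟨j₀, Finset.mem_univ _, ?_⟩
      · exact mul_le_mul_of_nonneg_right (le_of_lt (hμS j)) (by positivity)
      · exact mul_lt_mul_of_pos_right (hμS j₀) (pow_pos (norm_pos_iff.mpr hj₀) 2)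
    -- but f c = 0 means TZ v = TN v
    have hZN : TZ v = TN v := by
      have hfc : TR v = 0 := hc
      have : TZ v = TR v + TN v := by
        rw [hTZ, hTR, hTN, h, map_add]; rfl
      rw [this, hfc, zero_add]
    have hNv : ‖TN v‖ ^ 2 ≤ specNorm N ^ 2 * ‖v‖ ^ 2 := by
      have h1 : ‖TN v‖ ≤ specNorm N * ‖v‖ := TN.le_opNorm v
      calc ‖TN v‖ ^ 2 ≤ (specNorm N * ‖v‖) ^ 2 := by
            exact pow_le_pow_left₀ (norm_nonneg _) h1 2
        _ = specNorm N ^ 2 * ‖v‖ ^ 2 := by ring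
    rw [hZN] at hstrict
    linarith
  -- conclude
  have hcard : S.card = Module.finrank ℂ (ι → ℂ) := by
    rw [Module.finrank_fintype_fun_eq_card, Fintype.card_coe]
  rw [hcard, ← LinearMap.finrank_range_of_inj hinj]
  have hle : LinearMap.range f ≤ LinearMap.range (Matrix.toEuclideanLin (𝕜 := ℂ) R) := by
    rw [← Matrix.coe_toEuclideanCLM_eq_toEuclideanLin]
    exact LinearMap.range_comp_le_range _ _
  have : R.rank = Module.finrank ℂ (LinearMap.range (Matrix.toEuclideanLin (𝕜 := ℂ) R)) := by
    rw [Matrix.toEuclideanLin_eq_toLin]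
    exact Matrix.rank_eq_finrank_range_toLin R _ _
  rw [this]
  exact Submodule.finrank_mono hle

/-- if Z_n = R_n + N_n with rank(R_n)/n → 0 and ‖N_n‖ → 0 in spectral
norm, then {Z_n}_n is zero-distributed in the singular value sense:
(1/n) Σ_j F(σ_j(Z_n)) → F(0) for every continuous compactly supported F. -/
theorem stmt_11 (Z R N : (n : ℕ) → Matrix (Fin n) (Fin n) ℂ)
    (hsplit : ∀ n, Z n = R n + N n)
    (hrank : Tendsto (fun n : ℕ => ((R n).rank : ℝ) / n) atTop (nhds 0))
    (hnorm : Tendsto (fun n : ℕ => specNorm (N n)) atTop (nhds 0))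
    (F : ℝ → ℝ) (hF : Continuous F) (hFc : HasCompactSupport F) :
    Tendsto (fun n : ℕ => (1 / (n : ℝ)) * ∑ j, F (singVals (Z n) j)) atTop (nhds (F 0)) := by
  classical
  obtain ⟨C, hC⟩ : ∃ C, ∀ x, |F x| ≤ C := by
    obtain ⟨C, hC⟩ := (hF.abs).bounded_above_of_compact_support hFc.abs
    exact ⟨C, fun x => by simpa using hC x⟩
  have hC0 : (0:ℝ) ≤ C := le_trans (abs_nonneg _) (hC 0)
  rw [Metric.tendsto_atTop]
  intro ε hε
  obtain ⟨δ, hδ0, hδ⟩ : ∃ δ > 0, ∀ x : ℝ, |x - 0| < δ → |F x - F 0| < ε/3 := by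
    have h := Metric.continuousAt_iff.mp (hF.continuousAt (x := 0)) (ε/3) (by linarith)
    obtain ⟨δ, hδ0, hh⟩ := h
    exact ⟨δ, hδ0, fun x hx => by
      have := hh (show dist x 0 < δ by simpa [Real.dist_eq] using hx)
      simpa [Real.dist_eq] using this⟩
  have h1 : ∀ᶠ n in atTop, specNorm (N n) < δ := hnorm.eventually_lt_const hδ0
  have h2 : ∀ᶠ n in atTop, ((R n).rank : ℝ)/(n:ℝ) < ε/(3*(2*C+1)) :=
    hrank.eventually_lt_const (by positivity)
  have h3 : ∀ᶠ n : ℕ in atTop, 1 ≤ n := eventually_ge_atTop 1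
  have hall := (h1.and h2).and h3
  rw [eventually_atTop] at hall
  obtain ⟨M, hM⟩ := hall
  refine ⟨M, fun n hn => ?_⟩
  obtain ⟨⟨ha, hb⟩, hc⟩ := hM n hn
  have hnpos : (0:ℝ) < n := by exact_mod_cast hc
  set σ := singVals (Z n) with hσ
  set S := (Finset.univ.filter fun j => specNorm (N n) < σ j) with hS
  have hcard : S.card ≤ (R n).rank := key_count _ _ _ (hsplit n)
  -- rewrite the difference
  have hrw : (1 / (n:ℝ)) * (∑ j, F (σ j)) - F 0
      = (1 / (n:ℝ)) * ∑ j, (F (σ j) - F 0) := by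
    rw [Finset.sum_sub_distrib, Finset.sum_const, Finset.card_univ, Fintype.card_fin,
      nsmul_eq_mul, mul_sub]
    congr 1
    field_simp
  rw [Real.dist_eq, hrw]
  have habs : |(1 / (n:ℝ)) * ∑ j, (F (σ j) - F 0)| ≤ (1 / (n:ℝ)) * ∑ j, |F (σ j) - F 0| := by
    rw [abs_mul, abs_of_nonneg (by positivity : (0:ℝ) ≤ 1/(n:ℝ))]
    exact mul_le_mul_of_nonneg_left (Finset.abs_sum_le_sum_abs _ _) (by positivity)
  -- split the sum
  have hsplitsum : ∑ j, |F (σ j) - F 0|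
      = (∑ j ∈ S, |F (σ j) - F 0|) + ∑ j ∈ Finset.univ.filter (fun j => ¬ specNorm (N n) < σ j), |F (σ j) - F 0| := by
    rw [hS]
    exact (Finset.sum_filter_add_sum_filter_not _ _ _).symm
  have hbig : ∑ j ∈ S, |F (σ j) - F 0| ≤ S.card * (2*C) := by
    rw [← nsmul_eq_mul]
    refine Finset.sum_le_card_nsmul _ _ _ fun j _ => ?_
    calc |F (σ j) - F 0| ≤ |F (σ j)| + |F 0| := abs_sub _ _
      _ ≤ C + C := add_le_add (hC _) (hC _)
      _ = 2*C := by ring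
  have hsmall : ∑ j ∈ Finset.univ.filter (fun j => ¬ specNorm (N n) < σ j), |F (σ j) - F 0|
      ≤ (n:ℝ) * (ε/3) := by
    calc ∑ j ∈ Finset.univ.filter (fun j => ¬ specNorm (N n) < σ j), |F (σ j) - F 0|
        ≤ (Finset.univ.filter (fun j => ¬ specNorm (N n) < σ j)).card • (ε/3) := by
          refine Finset.sum_le_card_nsmul _ _ _ fun j hj => ?_
          have hσj : σ j ≤ specNorm (N n) := not_lt.mp (Finset.mem_filter.mp hj).2
          have hσ0 : 0 ≤ σ j := Real.sqrt_nonneg _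
          refine le_of_lt (hδ _ ?_)
          rw [sub_zero, abs_of_nonneg hσ0]
          exact lt_of_le_of_lt hσj ha
      _ ≤ (n:ℝ) * (ε/3) := by
          rw [nsmul_eq_mul]
          refine mul_le_mul_of_nonneg_right ?_ (by linarith)
          have hcle : (Finset.univ.filter (fun j => ¬ specNorm (N n) < σ j)).card ≤ n := by
            simpa using Finset.card_filter_le (Finset.univ : Finset (Fin n)) _
          exact_mod_cast hcle
  have hfinal : (1 / (n:ℝ)) * ∑ j, |F (σ j) - F 0| ≤ ((R n).rank : ℝ)/(n:ℝ) * (2*C) + ε/3 := by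
    rw [hsplitsum]
    have hcard' : (S.card : ℝ) ≤ ((R n).rank : ℝ) := by exact_mod_cast hcard
    have : (1 / (n:ℝ)) * ((S.card : ℝ) * (2*C) + (n:ℝ) * (ε/3))
        ≤ ((R n).rank : ℝ)/(n:ℝ) * (2*C) + ε/3 := by
      rw [mul_add]
      have e1 : (1 / (n:ℝ)) * ((S.card:ℝ) * (2*C)) ≤ ((R n).rank : ℝ)/(n:ℝ) * (2*C) := by
        calc (1 / (n:ℝ)) * ((S.card:ℝ) * (2*C)) = (S.card:ℝ) * (2*C) / (n:ℝ) := by ring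
          _ ≤ ((R n).rank : ℝ) * (2*C) / (n:ℝ) := by
              gcongr
          _ = ((R n).rank : ℝ)/(n:ℝ) * (2*C) := by ring
      have e2 : (1 / (n:ℝ)) * ((n:ℝ) * (ε/3)) = ε/3 := by field_simp
      linarith
    refine le_trans ?_ this
    exact mul_le_mul_of_nonneg_left (add_le_add hbig hsmall) (by positivity)
  have hranksmall : ((R n).rank : ℝ)/(n:ℝ) * (2*C) < ε/3 := by
    have h2C : ((R n).rank : ℝ)/(n:ℝ) * (2*C) ≤ ((R n).rank : ℝ)/(n:ℝ) * (2*C+1) := by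
      refine mul_le_mul_of_nonneg_left (by linarith) (by positivity)
    have : ((R n).rank : ℝ)/(n:ℝ) * (2*C+1) < ε/(3*(2*C+1)) * (2*C+1) :=
      mul_lt_mul_of_pos_right hb (by linarith)
    have heq : ε/(3*(2*C+1)) * (2*C+1) = ε/3 := by field_simp
    linarith
  calc |(1 / (n:ℝ)) * ∑ j, (F (σ j) - F 0)| ≤ (1 / (n:ℝ)) * ∑ j, |F (σ j) - F 0| := habs
    _ ≤ ((R n).rank : ℝ)/(n:ℝ) * (2*C) + ε/3 := hfinal
    _ < ε/3 + ε/3 := by linarith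
    _ < ε := by linarith
end

section
/- If {Z_n}_n is zero-distributed (its singular value distribution is the zero function) and each Z_n is Hermitian, then the eigenvalue distribution of {Z_n}_n is also the zero function: for every continuous compactly supported F : ℂ → ℂ, (1/n) Σ_j F(λ_j(Z_n)) → F(0). -/
open Filter

lemma aux_count {m : Type*} [Fintype m] [DecidableEq m] (d e : m → ℝ)
    (Wc : Matrix m m ℂ) (hu : Wc * star Wc = 1)
    (h : Matrix.diagonal (fun i => (d i : ℂ)) =
      Wc * Matrix.diagonal (fun i => (e i : ℂ)) * star Wc) :
    Multiset.map d Finset.univ.val = Multiset.map e Finset.univ.val := by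
  have hdet : IsUnit Wc.det :=
    IsUnit.of_mul_eq_one (star Wc).det (by rw [← Matrix.det_mul, hu, Matrix.det_one])
  have hdet' : IsUnit (star Wc).det :=
    IsUnit.of_mul_eq_one Wc.det (by rw [mul_comm, ← Matrix.det_mul, hu, Matrix.det_one])
  have hrank : ∀ a : ℝ, (Matrix.diagonal (fun i => (d i : ℂ) - (a : ℂ))).rank
      = (Matrix.diagonal (fun i => (e i : ℂ) - (a : ℂ))).rank := by
    intro a
    have e1 : ∀ f : m → ℂ, Matrix.diagonal (fun i => f i - (a : ℂ))
        = Matrix.diagonal f - (a : ℂ) • 1 := by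
      intro f
      ext i j
      by_cases hij : i = j
      · subst hij; simp [Matrix.one_apply]
      · simp [Matrix.diagonal_apply_ne _ hij, Matrix.one_apply_ne hij]
    have h2 : Matrix.diagonal (fun i => (d i : ℂ) - (a : ℂ))
        = Wc * Matrix.diagonal (fun i => (e i : ℂ) - (a : ℂ)) * star Wc := by
      rw [e1, e1, h, Matrix.mul_sub, Matrix.sub_mul]
      congr 1
      rw [Matrix.mul_smul, Matrix.smul_mul, mul_one, hu]
    rw [h2, Matrix.rank_mul_eq_left_of_isUnit_det (star Wc) _ hdet',
      Matrix.rank_mul_eq_right_of_isUnit_det Wc _ hdet]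
  have hcard : ∀ a : ℝ, Fintype.card {i // d i = a} = Fintype.card {i // e i = a} := by
    intro a
    have key : ∀ f : m → ℝ, (Matrix.diagonal (fun i => (f i : ℂ) - (a : ℂ))).rank
        = Fintype.card {i // f i ≠ a} := by
      intro f
      rw [Matrix.rank_diagonal]
      apply Fintype.card_congr
      apply Equiv.subtypeEquivRight
      intro i
      rw [sub_ne_zero]
      exact_mod_cast Iff.rfl
    have h1 := (key d).symm.trans ((hrank a).trans (key e))
    have c1 : Fintype.card {i // ¬ d i = a} = Fintype.card m - Fintype.card {i // d i = a} :=
      Fintype.card_subtype_compl _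
    have c2 : Fintype.card {i // ¬ e i = a} = Fintype.card m - Fintype.card {i // e i = a} :=
      Fintype.card_subtype_compl _
    have l1 : Fintype.card {i // d i = a} ≤ Fintype.card m := Fintype.card_subtype_le _
    have l2 : Fintype.card {i // e i = a} ≤ Fintype.card m := Fintype.card_subtype_le _
    simp only [ne_eq] at h1
    omega
  ext a
  rw [Multiset.count_map, Multiset.count_map]
  have key : ∀ f : m → ℝ, Multiset.card (Multiset.filter (fun i => a = f i) Finset.univ.val)
      = Fintype.card {i // f i = a} := by
    intro f
    rw [Fintype.card_subtype]
    show Multiset.card (Multiset.filter (fun i => a = f i) Finset.univ.val)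
      = Multiset.card (Multiset.filter (fun i => f i = a) Finset.univ.val)
    congr 1
    exact Multiset.filter_congr (fun x _ => eq_comm)
  rw [key d, key e, hcard]

lemma sing_multiset {m : ℕ} (A : Matrix (Fin m) (Fin m) ℂ) (hA : A.IsHermitian)
    (hmult : Multiset.map (Matrix.isHermitian_conjTranspose_mul_self A).eigenvalues Finset.univ.val
      = Multiset.map (fun j => hA.eigenvalues j * hA.eigenvalues j) Finset.univ.val) :
    Multiset.map (singVals A) Finset.univ.val
      = Multiset.map (fun j => |hA.eigenvalues j|) Finset.univ.val := by
  have e1 : Multiset.map (singVals A) Finset.univ.val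
      = Multiset.map Real.sqrt
        (Multiset.map (Matrix.isHermitian_conjTranspose_mul_self A).eigenvalues Finset.univ.val) := by
    rw [Multiset.map_map]; rfl
  rw [e1, hmult, Multiset.map_map]
  exact Multiset.map_congr rfl (fun x _ => Real.sqrt_mul_self_eq_abs _)

lemma eig_multiset {m : ℕ} (A : Matrix (Fin m) (Fin m) ℂ) (hA : A.IsHermitian) :
    Multiset.map (Matrix.isHermitian_conjTranspose_mul_self A).eigenvalues Finset.univ.val
      = Multiset.map (fun j => hA.eigenvalues j * hA.eigenvalues j) Finset.univ.val := by
  have hB := Matrix.isHermitian_conjTranspose_mul_self A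
  set U : Matrix (Fin m) (Fin m) ℂ := (hA.eigenvectorUnitary : Matrix (Fin m) (Fin m) ℂ) with hU
  set V : Matrix (Fin m) (Fin m) ℂ := (hB.eigenvectorUnitary : Matrix (Fin m) (Fin m) ℂ) with hV
  have hU1 : U * star U = 1 := Matrix.mem_unitaryGroup_iff.mp hA.eigenvectorUnitary.2
  have hU2 : star U * U = 1 := Matrix.mem_unitaryGroup_iff'.mp hA.eigenvectorUnitary.2
  have hV1 : V * star V = 1 := Matrix.mem_unitaryGroup_iff.mp hB.eigenvectorUnitary.2
  have hV2 : star V * V = 1 := Matrix.mem_unitaryGroup_iff'.mp hB.eigenvectorUnitary.2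
  have hU2' : ∀ X : Matrix (Fin m) (Fin m) ℂ, star U * (U * X) = X := fun X => by
    rw [← Matrix.mul_assoc, hU2, Matrix.one_mul]
  have hU1' : ∀ X : Matrix (Fin m) (Fin m) ℂ, U * (star U * X) = X := fun X => by
    rw [← Matrix.mul_assoc, hU1, Matrix.one_mul]
  set lam := hA.eigenvalues
  set mu := hB.eigenvalues
  set D : Matrix (Fin m) (Fin m) ℂ := Matrix.diagonal (RCLike.ofReal ∘ lam) with hD
  have hAA : A.conjTranspose * A = U * (D * D) * star U := by
    have h1 : U * (D * D) * star U = (U * D * star U) * (U * D * star U) := by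
      simp only [Matrix.mul_assoc, hU2']
    rw [h1, hU, hD, show A.conjTranspose = A from hA]
    conv_lhs => rw [hA.spectral_theorem]
    rfl
  have hBdiag : star V * (A.conjTranspose * A) * V = Matrix.diagonal (RCLike.ofReal ∘ mu) :=
    by have := hB.conjStarAlgAut_star_eigenvectorUnitary
       simpa [Unitary.conjStarAlgAut_apply, hV] using this
  set Wc : Matrix (Fin m) (Fin m) ℂ := star V * U with hW
  have hu : Wc * star Wc = 1 := by
    rw [hW, star_mul, star_star, Matrix.mul_assoc, hU1', hV2]
  have hkey : Matrix.diagonal (fun i => (mu i : ℂ))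
      = Wc * Matrix.diagonal (fun i => ((lam i * lam i : ℝ) : ℂ)) * star Wc := by
    have hDD : D * D = Matrix.diagonal (fun i => ((lam i * lam i : ℝ) : ℂ)) := by
      rw [hD, Matrix.diagonal_mul_diagonal]
      funext i
      push_cast
      rfl
    have : Matrix.diagonal (fun i => (mu i : ℂ)) = star V * (A.conjTranspose * A) * V := by
      rw [hBdiag]; rfl
    rw [this, hAA, hDD, hW, star_mul, star_star]
    simp only [Matrix.mul_assoc]
  exact aux_count mu (fun j => lam j * lam j) Wc hu hkey

lemma key_sum {m : ℕ} (A : Matrix (Fin m) (Fin m) ℂ) (hA : A.IsHermitian)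
    {M : Type*} [AddCommMonoid M] (g : ℝ → M) :
    ∑ j, g (singVals A j) = ∑ j, g |hA.eigenvalues j| := by
  have h := sing_multiset A hA (eig_multiset A hA)
  have e : ∀ (f : Fin m → ℝ), (∑ j, g (f j))
      = (Multiset.map g (Multiset.map f Finset.univ.val)).sum := by
    intro f; rw [Multiset.map_map]; rfl
  rw [e, e, h]

/-- if {Z_n}_n is zero-distributed in the singular value sense and each
Z_n is Hermitian, then the eigenvalue distribution of {Z_n}_n is also the zero
function: (1/n) Σ_j F(λ_j(Z_n)) → F(0) for every continuous compactly supported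
F : ℂ → ℂ. -/

theorem stmt_12 (Z : (n : ℕ) → Matrix (Fin n) (Fin n) ℂ)
    (hherm : ∀ n, (Z n).IsHermitian)
    (hzd : ∀ F : ℝ → ℝ, Continuous F → HasCompactSupport F →
      Tendsto (fun n : ℕ => (1 / (n : ℝ)) * ∑ j, F (singVals (Z n) j)) atTop (nhds (F 0)))
    (F : ℂ → ℂ) (hF : Continuous F) (hFc : HasCompactSupport F) :
    Tendsto (fun n : ℕ => (1 / (n : ℂ)) * ∑ j, F ((((hherm n).eigenvalues j : ℝ)) : ℂ))
      atTop (nhds (F 0)) := by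
  obtain ⟨M, hM⟩ := hF.bounded_above_of_compact_support hFc
  have hM0 : 0 ≤ M := le_trans (norm_nonneg _) (hM 0)
  have hM1 : (0:ℝ) < 2*M+1 := by linarith
  rw [Metric.tendsto_atTop]
  intro ε hε
  obtain ⟨δ, hδ0, hδ⟩ := Metric.continuousAt_iff.mp hF.continuousAt (ε/3) (by linarith)
  set G : ℝ → ℝ := fun x => max (1 - |x|/δ) 0 with hG
  have hGcont : Continuous G :=
    (continuous_const.sub (continuous_abs.div_const δ)).max continuous_const
  have hGle : ∀ x, G x ≤ 1 := by
    intro x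
    rw [hG]
    apply max_le _ (by linarith)
    have : 0 ≤ |x|/δ := div_nonneg (abs_nonneg x) hδ0.le
    linarith
  have hGnn : ∀ x, 0 ≤ G x := fun x => le_max_right _ _
  have hGzero : ∀ x : ℝ, ¬ |x| < δ → G x = 0 := by
    intro x hx
    have h1 : 1 ≤ |x|/δ := (one_le_div hδ0).mpr (not_lt.mp hx)
    rw [hG]
    exact max_eq_right (by linarith)
  have hGsupp : HasCompactSupport G := by
    apply HasCompactSupport.intro (isCompact_Icc (a := -δ) (b := δ))
    intro x hx
    apply hGzero
    intro hlt
    exact hx (Set.mem_Icc.mpr ⟨(abs_lt.mp hlt).1.le, (abs_lt.mp hlt).2.le⟩)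
  have hG0 : G 0 = 1 := by rw [hG]; simp
  have hGabs : ∀ x : ℝ, G |x| = G x := by
    intro x; rw [hG]; simp only [abs_abs]
  have hzero := hzd G hGcont hGsupp
  rw [hG0] at hzero
  have hsum : ∀ n : ℕ, ∑ j, G (singVals (Z n) j) = ∑ j, G ((hherm n).eigenvalues j) := by
    intro n
    rw [key_sum (Z n) (hherm n) G]
    exact Finset.sum_congr rfl (fun j _ => hGabs _)
  simp only [hsum] at hzero
  obtain ⟨N1, hN1⟩ := (Metric.tendsto_atTop.mp hzero) (ε/(3*(2*M+1))) (by positivity)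
  refine ⟨max N1 1, fun n hn => ?_⟩
  have hn1 : 1 ≤ n := le_trans (le_max_right _ _) hn
  have hnN : N1 ≤ n := le_trans (le_max_left _ _) hn
  have hnpos : (0:ℝ) < n := by exact_mod_cast hn1
  -- pointwise bound
  have hpt : ∀ x : ℝ, ‖F x - F 0‖ ≤ ε/3 + (2*M+1) * (1 - G x) := by
    intro x
    have hgl := hGle x
    have hgn := hGnn x
    by_cases hx : |x| < δ
    · have hdist : dist ((x:ℝ):ℂ) 0 < δ := by
        simpa [dist_eq_norm, Complex.norm_real, Real.norm_eq_abs] using hx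
      have h1 : dist (F x) (F 0) < ε/3 := hδ hdist
      rw [dist_eq_norm] at h1
      nlinarith
    · rw [hGzero x hx]
      have h2 : ‖F x - F 0‖ ≤ 2*M := by
        have := hM ((x:ℝ):ℂ); have := hM 0
        calc ‖F x - F 0‖ ≤ ‖F x‖ + ‖F 0‖ := norm_sub_le _ _
          _ ≤ 2*M := by linarith
      linarith
  -- main estimate
  have hsplit : (1/(n:ℂ)) * (∑ j : Fin n, F (((hherm n).eigenvalues j : ℝ) : ℂ)) - F 0
      = (1/(n:ℂ)) * ∑ j : Fin n, (F (((hherm n).eigenvalues j : ℝ):ℂ) - F 0) := by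
    rw [Finset.sum_sub_distrib, mul_sub]
    congr 1
    rw [Finset.sum_const, Finset.card_univ, Fintype.card_fin, nsmul_eq_mul]
    have hne : (n:ℂ) ≠ 0 := by
      exact_mod_cast Nat.cast_ne_zero.mpr (by omega)
    field_simp
  rw [dist_eq_norm, hsplit]
  have hnorm : ‖(1/(n:ℂ)) * ∑ j : Fin n, (F (((hherm n).eigenvalues j : ℝ):ℂ) - F 0)‖
      ≤ (1/(n:ℝ)) * ∑ j : Fin n, ‖F (((hherm n).eigenvalues j : ℝ):ℂ) - F 0‖ := by
    rw [norm_mul]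
    have h1 : ‖(1/(n:ℂ))‖ = 1/(n:ℝ) := by
      rw [norm_div, norm_one, Complex.norm_natCast]
    rw [h1]
    exact mul_le_mul_of_nonneg_left (norm_sum_le _ _) (by positivity)
  set s : ℝ := ∑ j : Fin n, G ((hherm n).eigenvalues j) with hs
  have hsle : ∑ j : Fin n, ‖F (((hherm n).eigenvalues j : ℝ):ℂ) - F 0‖
      ≤ ∑ j : Fin n, (ε/3 + (2*M+1) * (1 - G ((hherm n).eigenvalues j))) :=
    Finset.sum_le_sum (fun j _ => hpt _)
  have hcalc : (1/(n:ℝ)) * ∑ j : Fin n, (ε/3 + (2*M+1) * (1 - G ((hherm n).eigenvalues j)))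
      = ε/3 + (2*M+1) * (1 - (1/(n:ℝ)) * s) := by
    rw [Finset.sum_add_distrib, Finset.sum_const, Finset.card_univ, Fintype.card_fin,
      ← Finset.mul_sum, Finset.sum_sub_distrib, Finset.sum_const, Finset.card_univ,
      Fintype.card_fin, ← hs]
    simp only [nsmul_eq_mul, smul_eq_mul]
    field_simp
  have hdist1 := hN1 n hnN
  rw [Real.dist_eq] at hdist1
  have h1s : 1 - (1/(n:ℝ)) * s ≤ |(1/(n:ℝ)) * s - 1| := by
    rw [abs_sub_comm]; exact le_abs_self _
  have hfin : (2*M+1) * (1 - (1/(n:ℝ)) * s) < ε/3 := by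
    have h2 : (2*M+1) * (1 - (1/(n:ℝ)) * s) ≤ (2*M+1) * |(1/(n:ℝ)) * s - 1| :=
      mul_le_mul_of_nonneg_left h1s hM1.le
    have h3 : (2*M+1) * |(1/(n:ℝ)) * s - 1| < (2*M+1) * (ε/(3*(2*M+1))) :=
      (mul_lt_mul_iff_right₀ hM1).mpr hdist1
    have h4 : (2*M+1) * (ε/(3*(2*M+1))) = ε/3 := by field_simp
    linarith
  have hmono : (1/(n:ℝ)) * ∑ j : Fin n, ‖F (((hherm n).eigenvalues j : ℝ):ℂ) - F 0‖
      ≤ (1/(n:ℝ)) * ∑ j : Fin n, (ε/3 + (2*M+1) * (1 - G ((hherm n).eigenvalues j))) :=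
    mul_le_mul_of_nonneg_left hsle (by positivity)
  calc ‖(1/(n:ℂ)) * ∑ j : Fin n, (F (((hherm n).eigenvalues j : ℝ):ℂ) - F 0)‖
      ≤ (1/(n:ℝ)) * ∑ j : Fin n, ‖F (((hherm n).eigenvalues j : ℝ):ℂ) - F 0‖ := hnorm
    _ ≤ ε/3 + (2*M+1) * (1 - (1/(n:ℝ)) * s) := by rw [← hcalc]; exact hmono
    _ < ε := by linarith
end
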